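/- Assume r0 < ∞. Let V : [0,∞) × D → ℝ be continuously differentiable and suppose there are continuous functions W1, W2, W3 : D → ℝ, each positive definite relative to x*, such that W1(x) ≤ V(t,x) ≤ W2(x) and ∂V/∂t (t,x) + ∇ₓV(t,x) · f(t,x) ≤ −W3(x) for all (t,x) ∈ [0,∞) × D. Assume in addition that W1(x)/(r0² − ‖x − x*‖²) → +∞ as ‖x − x*‖ → r0 with x ∈ B(x*, r0), and that 2⟨x − x*, f(t,x)⟩ ≤ 0 (i.e., the derivative of ‖x − x*‖² along f is nonpositive) for all (t,x) ∈ [0,∞) × B(x*, r0). Then there exists a class KL function β defined on [0, r0) × [0,∞) such that every solution x(·) of ẋ = f(t,x) on [t0,∞) with x(t0) ∈ B(x*, r0) satisfies ‖x(t) − x*‖ ≤ β(‖x(t0) − x*‖, t − t0) for all t ≥ t0 ≥ 0. -/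

import Mathlib

open Set Filter Metric Topology
open scoped ENNReal NNReal RealInnerProductSpace

noncomputable section

/-- The domain `[0, a)` of a class `KL` function, where `a : ℝ≥0∞` (`a = ⊤` means `[0, ∞)`). -/
def KLdom (a : ℝ≥0∞) : Set ℝ := {r : ℝ | 0 ≤ r ∧ ENNReal.ofReal r < a}

/-- `β : [0, a) × [0, ∞) → [0, ∞)` is a class `KL` function: it is continuous, for each fixed
`t` the map `r ↦ β r t` is strictly increasing and vanishes at `0` (class `K`), and for each
fixed `r` the map `t ↦ β r t` is decreasing and tends to `0` at infinity. -/
def IsClassKL (a : ℝ≥0∞) (β : ℝ → ℝ → ℝ) : Prop :=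
  ContinuousOn (fun p : ℝ × ℝ => β p.1 p.2) (KLdom a ×ˢ Ici (0 : ℝ)) ∧
  (∀ r ∈ KLdom a, ∀ t ∈ Ici (0 : ℝ), 0 ≤ β r t) ∧
  (∀ t ∈ Ici (0 : ℝ), StrictMonoOn (fun r => β r t) (KLdom a)) ∧
  (∀ t ∈ Ici (0 : ℝ), β 0 t = 0) ∧
  (∀ r ∈ KLdom a, AntitoneOn (fun t => β r t) (Ici (0 : ℝ))) ∧
  (∀ r ∈ KLdom a, Tendsto (fun t => β r t) atTop (nhds 0))

/-- `W` is continuous on `D` and positive definite relative to `x₀`. -/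
def PosDefOn {E : Type*} [NormedAddCommGroup E] (D : Set E) (x₀ : E) (W : E → ℝ) : Prop :=
  ContinuousOn W D ∧ W x₀ = 0 ∧ ∀ x ∈ D, x ≠ x₀ → 0 < W x

/-!
Along a solution, `2⟪x - x*, f⟫ ≤ 0` keeps `‖x - x*‖` nonincreasing, so the solution stays in
the closed ball of radius `r = ‖x(t₀) - x*‖`. While it also stays outside `B(x*, ε)`, `V ≥ 0`
decreases at rate at least `m`, the minimum of `W₃` on the annulus, from a value at most `M`, the
maximum of `W₂` on the ball; hence it is within `ε` after time `M / m`. The infimum of the `ε`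
certified by time `s` is a bound `g(r, s)` that is nondecreasing in `r`, nonincreasing in `s`
and tends to `0`. Averaging `g` in time over unit windows and in `r` over `[r, (r + r₀) / 2]`
makes it jointly continuous without losing these properties, and
`r e^{-s} + min(r, ·)` turns the result into a class `KL` majorant.
-/

theorem KLdom_ofReal (a : ℝ) : KLdom (ENNReal.ofReal a) = Ico 0 a := by
  ext r
  exact and_congr_right ENNReal.ofReal_lt_ofReal_iff_of_nonneg

def windowAvg (h : ℝ → ℝ) (s : ℝ) : ℝ := ∫ v in (0 : ℝ)..1, h (s - v)

section windowAvg

variable {h h' : ℝ → ℝ}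

theorem windowAvg_eq_integral (h : ℝ → ℝ) (s : ℝ) : windowAvg h s = ∫ τ in s - 1..s, h τ := by
  rw [windowAvg, intervalIntegral.integral_comp_sub_left, sub_zero]

theorem Antitone.intervalIntegrable_comp_sub (hh : Antitone h) (s a b : ℝ) :
    IntervalIntegrable (fun v => h (s - v)) MeasureTheory.volume a b :=
  Monotone.intervalIntegrable fun _ _ hvw => hh (by linarith)

theorem Antitone.le_windowAvg (hh : Antitone h) (s : ℝ) : h s ≤ windowAvg h s := by
  simpa [windowAvg] using intervalIntegral.integral_mono_on zero_le_one intervalIntegrable_const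
    (hh.intervalIntegrable_comp_sub s 0 1) fun v (hv : v ∈ Icc 0 1) => hh (by linarith [hv.1])

theorem Antitone.windowAvg_le (hh : Antitone h) (s : ℝ) : windowAvg h s ≤ h (s - 1) := by
  simpa [windowAvg] using intervalIntegral.integral_mono_on zero_le_one
    (hh.intervalIntegrable_comp_sub s 0 1) intervalIntegrable_const
    fun v (hv : v ∈ Icc 0 1) => hh (by linarith [hv.2] : s - 1 ≤ s - v)

theorem Antitone.antitone_windowAvg (hh : Antitone h) : Antitone (windowAvg h) :=
  fun s s' hss' => intervalIntegral.integral_mono_on zero_le_one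
    (hh.intervalIntegrable_comp_sub s' 0 1) (hh.intervalIntegrable_comp_sub s 0 1)
    fun _ _ => hh (by linarith)

theorem windowAvg_le_windowAvg (hh : Antitone h) (hh' : Antitone h') (hle : h ≤ h') (s : ℝ) :
    windowAvg h s ≤ windowAvg h' s :=
  intervalIntegral.integral_mono_on zero_le_one (hh.intervalIntegrable_comp_sub s 0 1)
    (hh'.intervalIntegrable_comp_sub s 0 1) fun v _ => hle (s - v)

/-- Shifting the window moves mass `≤ C |s - s'|` in at one end and out at the other. -/
theorem Antitone.dist_windowAvg_le (hh : Antitone h) {C : ℝ} (hC : ∀ τ, ‖h τ‖ ≤ C) (s s' : ℝ) :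
    dist (windowAvg h s) (windowAvg h s') ≤ 2 * C * dist s s' := by
  have hint : ∀ a b, IntervalIntegrable h MeasureTheory.volume a b :=
    fun _ _ => hh.intervalIntegrable
  rw [windowAvg_eq_integral, windowAvg_eq_integral, dist_eq_norm,
    intervalIntegral.integral_interval_sub_interval_comm (hint _ _) (hint _ _) (hint _ _)]
  have hbound : ∀ a b, ‖∫ τ in a..b, h τ‖ ≤ C * |b - a| :=
    fun a b => intervalIntegral.norm_integral_le_of_norm_le_const fun τ _ => hC τ
  calc ‖(∫ τ in s - 1..s' - 1, h τ) - ∫ τ in s..s', h τ‖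
      ≤ ‖∫ τ in s - 1..s' - 1, h τ‖ + ‖∫ τ in s..s', h τ‖ := norm_sub_le _ _
    _ ≤ C * |s' - 1 - (s - 1)| + C * |s' - s| := add_le_add (hbound _ _) (hbound _ _)
    _ = 2 * C * dist s s' := by rw [Real.dist_eq, abs_sub_comm s]; ring_nf

end windowAvg

def radialAvg (r₀ : ℝ) (G : ℝ → ℝ → ℝ) (r s : ℝ) : ℝ :=
  ∫ u in (0 : ℝ)..1, G (r + u * ((r₀ - r) / 2)) s

section radialAvg

variable {r₀ : ℝ} {G : ℝ → ℝ → ℝ}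

theorem radialAvg_arg_mem {r u : ℝ} (hr : r ∈ Ico 0 r₀) (hu : u ∈ Icc (0 : ℝ) 1) :
    r + u * ((r₀ - r) / 2) ∈ Icc r ((r + r₀) / 2) := by
  have := hr.2
  constructor <;> nlinarith [hu.1, hu.2]

theorem add_div_two_mem_Ico {r : ℝ} (hr : r ∈ Ico 0 r₀) : (r + r₀) / 2 ∈ Ico 0 r₀ := by
  constructor <;> linarith [hr.1, hr.2]

theorem Icc_add_div_two_subset_Ico {r : ℝ} (hr : r ∈ Ico 0 r₀) : Icc r ((r + r₀) / 2) ⊆ Ico 0 r₀ :=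
  Icc_subset_Ico hr.1 (by linarith [hr.2])

variable (hG : ∀ s, MonotoneOn (G · s) (Ico 0 r₀))
include hG

theorem intervalIntegrable_radialAvg {r : ℝ} (hr : r ∈ Ico 0 r₀) (s : ℝ) :
    IntervalIntegrable (fun u => G (r + u * ((r₀ - r) / 2)) s) MeasureTheory.volume 0 1 := by
  refine MonotoneOn.intervalIntegrable fun u hu u' hu' huu' => ?_
  rw [uIcc_of_le zero_le_one] at hu hu'
  exact hG s (Icc_add_div_two_subset_Ico hr (radialAvg_arg_mem hr hu))
    (Icc_add_div_two_subset_Ico hr (radialAvg_arg_mem hr hu')) (by nlinarith [hr.2])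

theorem le_radialAvg {r : ℝ} (hr : r ∈ Ico 0 r₀) (s : ℝ) : G r s ≤ radialAvg r₀ G r s := by
  simpa [radialAvg] using intervalIntegral.integral_mono_on zero_le_one intervalIntegrable_const
    (intervalIntegrable_radialAvg hG hr s) fun u hu =>
      hG s hr (Icc_add_div_two_subset_Ico hr (radialAvg_arg_mem hr hu)) (radialAvg_arg_mem hr hu).1

theorem radialAvg_le {r : ℝ} (hr : r ∈ Ico 0 r₀) (s : ℝ) :
    radialAvg r₀ G r s ≤ G ((r + r₀) / 2) s := by
  simpa [radialAvg] using intervalIntegral.integral_mono_on zero_le_one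
    (intervalIntegrable_radialAvg hG hr s) intervalIntegrable_const fun u hu =>
      hG s (Icc_add_div_two_subset_Ico hr (radialAvg_arg_mem hr hu)) (add_div_two_mem_Ico hr)
        (radialAvg_arg_mem hr hu).2

theorem monotoneOn_radialAvg (s : ℝ) : MonotoneOn (radialAvg r₀ G · s) (Ico 0 r₀) :=
  fun r hr r' hr' hrr' => intervalIntegral.integral_mono_on zero_le_one
    (intervalIntegrable_radialAvg hG hr s) (intervalIntegrable_radialAvg hG hr' s) fun u hu =>
      hG s (Icc_add_div_two_subset_Ico hr (radialAvg_arg_mem hr hu))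
        (Icc_add_div_two_subset_Ico hr' (radialAvg_arg_mem hr' hu)) (by nlinarith [hu.2])

theorem radialAvg_le_radialAvg {r s s' : ℝ} (hr : r ∈ Ico 0 r₀)
    (hss' : ∀ ρ ∈ Ico 0 r₀, G ρ s ≤ G ρ s') : radialAvg r₀ G r s ≤ radialAvg r₀ G r s' :=
  intervalIntegral.integral_mono_on zero_le_one (intervalIntegrable_radialAvg hG hr s)
    (intervalIntegrable_radialAvg hG hr s') fun _ hu =>
      hss' _ (Icc_add_div_two_subset_Ico hr (radialAvg_arg_mem hr hu))

theorem dist_radialAvg_le {r s s' L : ℝ} (hr : r ∈ Ico 0 r₀)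
    (hL : ∀ ρ ∈ Ico 0 r₀, dist (G ρ s) (G ρ s') ≤ L) :
    dist (radialAvg r₀ G r s) (radialAvg r₀ G r s') ≤ L := by
  rw [dist_eq_norm, radialAvg, radialAvg, ← intervalIntegral.integral_sub
    (intervalIntegrable_radialAvg hG hr s) (intervalIntegrable_radialAvg hG hr s')]
  have hbound : ∀ u ∈ uIoc (0 : ℝ) 1,
      ‖G (r + u * ((r₀ - r) / 2)) s - G (r + u * ((r₀ - r) / 2)) s'‖ ≤ L := fun u hu =>
    (dist_eq_norm _ _).symm.trans_le (hL _ (Icc_add_div_two_subset_Ico hr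
      (radialAvg_arg_mem hr (Ioc_subset_Icc_self (uIoc_of_le (zero_le_one (α := ℝ)) ▸ hu)))))
  simpa using intervalIntegral.norm_integral_le_of_norm_le_const hbound

omit hG in
theorem radialAvg_eq {r : ℝ} (hr : r ≠ r₀) (s : ℝ) :
    radialAvg r₀ G r s = 2 / (r₀ - r) * ∫ ρ in r..(r + r₀) / 2, G ρ s := by
  have hc : (r₀ - r) / 2 ≠ 0 := div_ne_zero (sub_ne_zero.2 hr.symm) two_ne_zero
  have harg : ∀ u, r + u * ((r₀ - r) / 2) = (r₀ - r) / 2 * u + r := fun u => by ring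
  simp_rw [radialAvg, harg]
  rw [intervalIntegral.integral_comp_mul_add (G · s) hc, smul_eq_mul, inv_div]
  congr 2 <;> ring

theorem continuousOn_radialAvg {C : ℝ} {s : ℝ} (hC : ∀ ρ ∈ Ico 0 r₀, ‖G ρ s‖ ≤ C) :
    ContinuousOn (radialAvg r₀ G · s) (Ico 0 r₀) := by
  have hint : ∀ a ∈ Ico 0 r₀, ∀ b ∈ Ico 0 r₀, IntervalIntegrable (G · s) MeasureTheory.volume a b :=
    fun a ha b hb => ((hG s).mono (ordConnected_Ico.uIcc_subset ha hb)).intervalIntegrable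
  have hP : LipschitzOnWith C.toNNReal (fun a => ∫ ρ in (0 : ℝ)..a, G ρ s) (Ico 0 r₀) := by
    refine LipschitzOnWith.of_dist_le_mul fun a ha b hb => ?_
    have h0 : (0 : ℝ) ∈ Ico 0 r₀ := ⟨le_rfl, ha.1.trans_lt ha.2⟩
    rw [dist_eq_norm, intervalIntegral.integral_interval_sub_left (hint 0 h0 a ha) (hint 0 h0 b hb),
      Real.dist_eq]
    exact (intervalIntegral.norm_integral_le_of_norm_le_const fun ρ hρ =>
      hC ρ (ordConnected_Ico.uIcc_subset hb ha (uIoc_subset_uIcc hρ))).trans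
        (mul_le_mul_of_nonneg_right (Real.le_coe_toNNReal C) (abs_nonneg _))
  have hmid : MapsTo (fun r => (r + r₀) / 2) (Ico 0 r₀) (Ico 0 r₀) :=
    fun _ hr => add_div_two_mem_Ico hr
  refine ContinuousOn.congr (f := fun r => 2 / (r₀ - r) *
      ((∫ ρ in (0 : ℝ)..(r + r₀) / 2, G ρ s) - ∫ ρ in (0 : ℝ)..r, G ρ s)) ?_ fun r hr => ?_
  · exact (continuousOn_const.div (continuousOn_const.sub continuousOn_id) fun r hr =>
      sub_ne_zero.2 hr.2.ne').mul ((hP.continuousOn.comp (by fun_prop) hmid).sub hP.continuousOn)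
  · have h0 : (0 : ℝ) ∈ Ico 0 r₀ := ⟨le_rfl, hr.1.trans_lt hr.2⟩
    rw [radialAvg_eq hr.2.ne]
    dsimp only
    rw [intervalIntegral.integral_interval_sub_left
      (hint 0 h0 _ (add_div_two_mem_Ico hr)) (hint 0 h0 r hr)]

end radialAvg

structure IsDecayBound (r₀ : ℝ) (g : ℝ → ℝ → ℝ) : Prop where
  nonneg : ∀ r ∈ Ico 0 r₀, ∀ s, 0 ≤ g r s
  le_self : ∀ r ∈ Ico 0 r₀, ∀ s, g r s ≤ r
  monotoneOn : ∀ s, MonotoneOn (g · s) (Ico 0 r₀)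
  antitone : ∀ r ∈ Ico 0 r₀, Antitone (g r)
  tendsto : ∀ r ∈ Ico 0 r₀, Tendsto (g r) atTop (𝓝 0)

def decaySmoothing (r₀ : ℝ) (g : ℝ → ℝ → ℝ) : ℝ → ℝ → ℝ :=
  radialAvg r₀ fun ρ => windowAvg (g ρ)

namespace IsDecayBound

variable {r₀ : ℝ} {g : ℝ → ℝ → ℝ} (hg : IsDecayBound r₀ g)
include hg

theorem monotoneOn_windowAvg (s : ℝ) : MonotoneOn (fun ρ => windowAvg (g ρ) s) (Ico 0 r₀) :=
  fun _ hρ _ hρ' hρρ' => windowAvg_le_windowAvg (hg.antitone _ hρ) (hg.antitone _ hρ')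
    (fun τ => hg.monotoneOn τ hρ hρ' hρρ') s

theorem norm_le {r : ℝ} (hr : r ∈ Ico 0 r₀) (s : ℝ) : ‖g r s‖ ≤ r₀ := by
  rw [Real.norm_of_nonneg (hg.nonneg r hr s)]
  exact (hg.le_self r hr s).trans hr.2.le

theorem norm_windowAvg_le {ρ : ℝ} (hρ : ρ ∈ Ico 0 r₀) (s : ℝ) : ‖windowAvg (g ρ) s‖ ≤ r₀ := by
  rw [Real.norm_of_nonneg ((hg.nonneg ρ hρ s).trans ((hg.antitone ρ hρ).le_windowAvg s))]
  exact ((hg.antitone ρ hρ).windowAvg_le s).trans ((hg.le_self ρ hρ _).trans hρ.2.le)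

theorem le_decaySmoothing {r : ℝ} (hr : r ∈ Ico 0 r₀) (s : ℝ) : g r s ≤ decaySmoothing r₀ g r s :=
  ((hg.antitone r hr).le_windowAvg s).trans (le_radialAvg hg.monotoneOn_windowAvg hr s)

theorem decaySmoothing_le {r : ℝ} (hr : r ∈ Ico 0 r₀) (s : ℝ) :
    decaySmoothing r₀ g r s ≤ g ((r + r₀) / 2) (s - 1) :=
  (radialAvg_le hg.monotoneOn_windowAvg hr s).trans
    ((hg.antitone _ (add_div_two_mem_Ico hr)).windowAvg_le s)

theorem decaySmoothing_nonneg {r : ℝ} (hr : r ∈ Ico 0 r₀) (s : ℝ) : 0 ≤ decaySmoothing r₀ g r s :=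
  (hg.nonneg r hr s).trans (hg.le_decaySmoothing hr s)

theorem antitone_decaySmoothing {r : ℝ} (hr : r ∈ Ico 0 r₀) : Antitone (decaySmoothing r₀ g r) :=
  fun _ _ hss' => radialAvg_le_radialAvg hg.monotoneOn_windowAvg hr fun ρ hρ =>
    (hg.antitone ρ hρ).antitone_windowAvg hss'

theorem tendsto_decaySmoothing {r : ℝ} (hr : r ∈ Ico 0 r₀) :
    Tendsto (decaySmoothing r₀ g r) atTop (𝓝 0) :=
  squeeze_zero (hg.decaySmoothing_nonneg hr) (hg.decaySmoothing_le hr)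
    ((hg.tendsto _ (add_div_two_mem_Ico hr)).comp
      (tendsto_atTop_add_const_right atTop (-1) tendsto_id))

theorem continuousOn_decaySmoothing :
    ContinuousOn (fun p : ℝ × ℝ => decaySmoothing r₀ g p.1 p.2) (Ico 0 r₀ ×ˢ univ) := by
  refine continuousOn_prod_of_continuousOn_lipschitzOnWith' _ (2 * r₀).toNNReal
    (fun r hr => LipschitzOnWith.of_dist_le_mul fun s _ s' _ => ?_)
    fun s _ => continuousOn_radialAvg hg.monotoneOn_windowAvg fun ρ hρ => hg.norm_windowAvg_le hρ s
  refine dist_radialAvg_le hg.monotoneOn_windowAvg hr fun ρ hρ => ?_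
  exact ((hg.antitone ρ hρ).dist_windowAvg_le (hg.norm_le hρ) s s').trans
    (mul_le_mul_of_nonneg_right (Real.le_coe_toNNReal _) dist_nonneg)

theorem exists_isClassKL_ge (hr₀ : 0 < r₀) :
    ∃ β : ℝ → ℝ → ℝ, IsClassKL (ENNReal.ofReal r₀) β ∧ ∀ r ∈ Ico 0 r₀, ∀ s, g r s ≤ β r s := by
  refine ⟨fun r s => r * Real.exp (-s) + min r (decaySmoothing r₀ g r s),
    ⟨?_, ?_, ?_, ?_, ?_, ?_⟩, ?_⟩ <;> simp only [KLdom_ofReal]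
  · exact (by fun_prop : Continuous fun p : ℝ × ℝ => p.1 * Real.exp (-p.2)).continuousOn.add
      (ContinuousOn.inf continuousOn_fst
        (hg.continuousOn_decaySmoothing.mono (Set.prod_mono_right (subset_univ _))))
  · intro r hr s _
    exact add_nonneg (mul_nonneg hr.1 (Real.exp_pos _).le)
      (le_min hr.1 (hg.decaySmoothing_nonneg hr s))
  · intro s _ r hr r' hr' hrr'
    exact add_lt_add_of_lt_of_le (mul_lt_mul_of_pos_right hrr' (Real.exp_pos _))
      (min_le_min hrr'.le (monotoneOn_radialAvg hg.monotoneOn_windowAvg s hr hr' hrr'.le))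
  · intro s _
    simpa using hg.decaySmoothing_nonneg ⟨le_rfl, hr₀⟩ s
  · intro r hr s (hs : 0 ≤ s) s' _ hss'
    exact add_le_add (mul_le_mul_of_nonneg_left (Real.exp_le_exp.2 (neg_le_neg hss')) hr.1)
      (min_le_min le_rfl (hg.antitone_decaySmoothing hr hss'))
  · intro r hr
    simpa using (Real.tendsto_exp_neg_atTop_nhds_zero.const_mul r).add
      (squeeze_zero (fun s => le_min hr.1 (hg.decaySmoothing_nonneg hr s))
        (fun _ => min_le_right _ _)
        (hg.tendsto_decaySmoothing hr))
  · intro r hr s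
    exact (le_min (hg.le_self r hr s) (hg.le_decaySmoothing hr s)).trans
      (le_add_of_nonneg_left (mul_nonneg hr.1 (Real.exp_pos _).le))

end IsDecayBound

/-- `r` is always admitted since distances along solutions never increase. -/
def settlingBound (T : ℝ → ℝ → ℝ) (r s : ℝ) : ℝ :=
  sInf (insert r {ε | 0 < ε ∧ T r ε < s})

section settlingBound

variable {T : ℝ → ℝ → ℝ}

theorem bddBelow_settlingBound_set {r : ℝ} (hr : 0 ≤ r) (s : ℝ) :
    BddBelow (insert r {ε | 0 < ε ∧ T r ε < s}) :=
  ⟨0, forall_mem_insert.2 ⟨hr, fun _ hε => hε.1.le⟩⟩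

theorem settlingBound_le {r s ε : ℝ} (hr : 0 ≤ r) (hε : 0 < ε) (hT : T r ε < s) :
    settlingBound T r s ≤ ε :=
  csInf_le (bddBelow_settlingBound_set hr s) (mem_insert_of_mem _ ⟨hε, hT⟩)

theorem le_settlingBound {d r s : ℝ} (hd : d ≤ r) (h : ∀ ε, 0 < ε → T r ε < s → d ≤ ε) :
    d ≤ settlingBound T r s :=
  le_csInf (insert_nonempty _ _) (forall_mem_insert.2 ⟨hd, fun ε hε => h ε hε.1 hε.2⟩)

theorem isDecayBound_settlingBound {r₀ : ℝ} (hT : ∀ ε > 0, MonotoneOn (T · ε) (Ico 0 r₀)) :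
    IsDecayBound r₀ (settlingBound T) where
  nonneg _ hr _ := le_settlingBound hr.1 fun _ hε _ => hε.le
  le_self _ hr s := csInf_le (bddBelow_settlingBound_set hr.1 s) (mem_insert _ _)
  monotoneOn s _ hr _ hr' hrr' :=
    le_settlingBound ((csInf_le (bddBelow_settlingBound_set hr.1 s) (mem_insert _ _)).trans hrr')
      fun ε hε hT' => settlingBound_le hr.1 hε ((hT ε hε hr hr' hrr').trans_lt hT')
  antitone _ hr _ _ hss' := csInf_le_csInf (bddBelow_settlingBound_set hr.1 _) (insert_nonempty _ _)
    (insert_subset_insert fun _ hε => ⟨hε.1, hε.2.trans_le hss'⟩)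
  tendsto r hr := tendsto_order.2
    ⟨fun _ ha => Eventually.of_forall fun _ =>
        ha.trans_le (le_settlingBound hr.1 fun _ hε _ => hε.le),
      fun a ha => (eventually_gt_atTop (T r (a / 2))).mono fun _ hs =>
        (settlingBound_le hr.1 (half_pos ha) hs).trans_lt (half_lt_self ha)⟩

end settlingBound

theorem image_le_of_deriv_right_nonpos_of_lt {f f' : ℝ → ℝ} {a b L : ℝ}
    (hf : ContinuousOn f (Icc a b)) (hf' : ∀ x ∈ Ico a b, HasDerivWithinAt f (f' x) (Ici x) x)
    (ha : f a < L) (bound : ∀ x ∈ Ico a b, f x < L → f' x ≤ 0) :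
    ∀ ⦃x⦄, x ∈ Icc a b → f x ≤ f a := by
  intro x hx
  have hab : a ≤ b := hx.1.trans hx.2
  -- A barrier of small positive slope `δ` stays below `L` on `[a, b]`, so `f` never reaches `L`.
  set δ := (L - f a) / (b - a + 1)
  have hδ : 0 < δ := div_pos (by linarith) (by linarith)
  have hB : ∀ y ∈ Icc a b, f a + δ * (y - a) < L := fun y hy => by
    have : δ * (b - a + 1) = L - f a := div_mul_cancel₀ _ (by linarith)
    nlinarith [hy.2]
  have hbelow : ∀ y ∈ Icc a b, f y < L := fun y hy =>
    (image_le_of_deriv_right_lt_deriv_boundary' hf hf' (B := fun y => f a + δ * (y - a))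
      (B' := fun _ => δ) (by simp) (by fun_prop)
      (fun y _ => (((hasDerivWithinAt_id y _).sub_const a).const_mul δ).const_add (f a)
        |>.congr_deriv (by simp))
      (fun y hy hfy => (bound y hy (hfy ▸ hB y (Ico_subset_Icc_self hy))).trans_lt hδ) hy).trans_lt
      (hB y hy)
  exact image_le_of_deriv_right_le_deriv_boundary hf hf' (B := fun _ => f a) (B' := fun _ => 0)
    le_rfl continuousOn_const
    (fun y _ => hasDerivWithinAt_const y _ (f a))
    (fun y hy => bound y hy (hbelow y (Ico_subset_Icc_self hy))) hx

theorem antitoneOn_of_deriv_nonpos_of_lt {f f' : ℝ → ℝ} {a L : ℝ}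
    (hf : ∀ x ∈ Ici a, HasDerivWithinAt f (f' x) (Ici a) x) (ha : f a < L)
    (bound : ∀ x ∈ Ici a, f x < L → f' x ≤ 0) : AntitoneOn f (Ici a) := by
  have hcont : ContinuousOn f (Ici a) := fun x hx => (hf x hx).continuousWithinAt
  have hfence : ∀ u ∈ Ici a, f u < L → ∀ v ∈ Ici u, f v ≤ f u := fun u hu hu' v hv =>
    image_le_of_deriv_right_nonpos_of_lt (b := v) (hcont.mono fun y hy => hu.trans hy.1)
      (fun y hy => (hf y (hu.trans hy.1)).mono (Ici_subset_Ici.2 (hu.trans hy.1))) hu'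
      (fun y hy => bound y (hu.trans hy.1)) ⟨hv, le_rfl⟩
  intro u hu v _ huv
  exact hfence u hu ((hfence a self_mem_Ici ha u hu).trans_lt ha) v huv

theorem antitoneOn_dist_of_inner_nonpos {E : Type*} [NormedAddCommGroup E] [InnerProductSpace ℝ E]
    {x v : ℝ → E} {c : E} {R t₀ : ℝ} (hx : ∀ t ∈ Ici t₀, HasDerivWithinAt x (v t) (Ici t₀) t)
    (hv : ∀ t ∈ Ici t₀, x t ∈ ball c R → ⟪x t - c, v t⟫ ≤ 0) (h₀ : x t₀ ∈ ball c R) :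
    AntitoneOn (fun t => dist (x t) c) (Ici t₀) := by
  have hsq : AntitoneOn (fun t => ‖x t - c‖ ^ 2) (Ici t₀) := by
    refine antitoneOn_of_deriv_nonpos_of_lt (L := R ^ 2)
      (fun t ht => ((hx t ht).sub_const c).norm_sq) ?_ fun t ht hlt => ?_
    · rw [← dist_eq_norm]
      exact pow_lt_pow_left₀ h₀ dist_nonneg two_ne_zero
    · have : x t ∈ ball c R := by
        rw [mem_ball, dist_eq_norm]
        exact lt_of_pow_lt_pow_left₀ 2 (dist_nonneg.trans (mem_ball.1 h₀).le) hlt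
      linarith [hv t ht this]
  intro s hs t ht hst
  simpa only [dist_eq_norm] using pow_le_pow_iff_left₀ (norm_nonneg _) (norm_nonneg _)
    two_ne_zero |>.1 (hsq hs ht hst)

theorem hasDerivWithinAt_comp_curve {F : Type*} [NormedAddCommGroup F] [NormedSpace ℝ F]
    {V : ℝ → F → ℝ} {D : Set F} {x : ℝ → F} {v : F} {s : Set ℝ} {t : ℝ}
    (hV : DifferentiableWithinAt ℝ (fun p : ℝ × F => V p.1 p.2) (Ici 0 ×ˢ D) (t, x t))
    (hD : D ∈ 𝓝 (x t)) (ht : 0 ≤ t) (hs : MapsTo (fun τ => (τ, x τ)) s (Ici 0 ×ˢ D))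
    (hx : HasDerivWithinAt x v s t) :
    HasDerivWithinAt (fun τ => V τ (x τ))
      (derivWithin (fun τ => V τ (x t)) (Ici 0) t + fderiv ℝ (V t) (x t) v) s t := by
  have hL := hV.hasFDerivWithinAt
  set L := fderivWithin ℝ (fun p : ℝ × F => V p.1 p.2) (Ici 0 ×ˢ D) (t, x t)
  have hVt : HasDerivWithinAt (fun τ => V τ (x t)) (L (1, 0)) (Ici 0) t :=
    hL.comp_hasDerivWithinAt (f := fun τ => (τ, x t)) t
      ((hasDerivWithinAt_id t _).prodMk (hasDerivWithinAt_const t _ (x t)))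
      fun τ hτ => ⟨hτ, mem_of_mem_nhds hD⟩
  have hVx : HasFDerivAt (V t) (L.comp (ContinuousLinearMap.inr ℝ ℝ F)) (x t) :=
    (hL.comp (x t) (hasFDerivAt_prodMk_right t (x t)).hasFDerivWithinAt
      fun y hy => ⟨ht, hy⟩).hasFDerivAt hD
  rw [hVt.derivWithin (uniqueDiffOn_Ici 0 t ht), hVx.fderiv, ContinuousLinearMap.comp_apply,
    ContinuousLinearMap.inr_apply, ← map_add, Prod.mk_add_mk, add_zero, zero_add]
  exact hL.comp_hasDerivWithinAt t ((hasDerivWithinAt_id t s).prodMk hx) hs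

theorem PosDefOn.nonneg {E : Type*} [NormedAddCommGroup E] {D : Set E} {c : E} {W : E → ℝ}
    (hW : PosDefOn D c W) {y : E} (hy : y ∈ D) : 0 ≤ W y := by
  rcases eq_or_ne y c with rfl | hyc
  · exact hW.2.1.ge
  · exact (hW.2.2 y hy hyc).le

theorem PosDefOn.mono {E : Type*} [NormedAddCommGroup E] {D D' : Set E} {c : E} {W : E → ℝ}
    (hW : PosDefOn D c W) (hD : D' ⊆ D) : PosDefOn D' c W :=
  ⟨hW.1.mono hD, hW.2.1, fun y hy => hW.2.2 y (hD hy)⟩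

/-- If `V ≤ W₂` and `V̇ ≤ -W₃`, a trajectory starting in `closedBall c r` cannot spend longer than
this outside `ball c ε`. When that annulus is empty, `sInf ∅ = 0` makes the value `0`, which is
still a valid bound. -/
def lyapunovSettlingTime {E : Type*} [PseudoMetricSpace E] (W₂ W₃ : E → ℝ) (c : E) (r ε : ℝ) : ℝ :=
  sSup (W₂ '' closedBall c r) / sInf (W₃ '' (closedBall c r \ ball c ε))

section lyapunovSettlingTime

variable {E : Type*} [NormedAddCommGroup E] [ProperSpace E] {W W₂ W₃ : E → ℝ} {c y : E}
  {r ε : ℝ}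

theorem le_sSup_image_closedBall (hW : ContinuousOn W (closedBall c r)) (hy : y ∈ closedBall c r) :
    W y ≤ sSup (W '' closedBall c r) :=
  le_csSup ((isCompact_closedBall c r).bddAbove_image hW) (mem_image_of_mem W hy)

theorem isCompact_closedBall_diff_ball : IsCompact (closedBall c r \ ball c ε) :=
  (isCompact_closedBall c r).diff isOpen_ball

theorem sInf_image_closedBall_diff_ball_le (hW : ContinuousOn W (closedBall c r))
    (hy : y ∈ closedBall c r \ ball c ε) : sInf (W '' (closedBall c r \ ball c ε)) ≤ W y :=
  csInf_le (isCompact_closedBall_diff_ball.bddBelow_image (hW.mono sdiff_subset))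
    (mem_image_of_mem W hy)

theorem sInf_image_closedBall_diff_ball_pos (hW : PosDefOn (closedBall c r) c W) (hε : 0 < ε)
    (hne : (closedBall c r \ ball c ε).Nonempty) : 0 < sInf (W '' (closedBall c r \ ball c ε)) := by
  obtain ⟨y, hy, hWy⟩ := (isCompact_closedBall_diff_ball.image_of_continuousOn
    (hW.1.mono sdiff_subset)).sInf_mem (hne.image W)
  rw [← hWy]
  exact hW.2.2 y hy.1 fun hyc => hy.2 (hyc ▸ mem_ball_self hε)

theorem monotoneOn_lyapunovSettlingTime {R : ℝ} (hW₂ : PosDefOn (ball c R) c W₂)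
    (hW₃ : PosDefOn (ball c R) c W₃) (hε : 0 < ε) :
    MonotoneOn (lyapunovSettlingTime W₂ W₃ c · ε) (Ico 0 R) := by
  intro r hr r' hr' hrr'
  have hsub := closedBall_subset_ball (x := c) hr'.2
  have hM : 0 ≤ sSup (W₂ '' closedBall c r') :=
    hW₂.2.1 ▸ le_sSup_image_closedBall (hW₂.1.mono hsub) (mem_closedBall_self (hr.1.trans hrr'))
  have hm : 0 ≤ sInf (W₃ '' (closedBall c r' \ ball c ε)) :=
    Real.sInf_nonneg (forall_mem_image.2 fun y hy => hW₃.nonneg (hsub hy.1))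
  rcases (closedBall c r \ ball c ε).eq_empty_or_nonempty with hne | hne
  · simp only [lyapunovSettlingTime, hne, image_empty, Real.sInf_empty, div_zero]
    exact div_nonneg hM hm
  have hann : closedBall c r \ ball c ε ⊆ closedBall c r' \ ball c ε :=
    sdiff_subset_sdiff_left (closedBall_subset_closedBall hrr')
  exact div_le_div₀ hM
    (csSup_le_csSup ((isCompact_closedBall c r').bddAbove_image (hW₂.1.mono hsub))
      ((nonempty_closedBall.2 hr.1).image W₂) (image_mono (closedBall_subset_closedBall hrr')))
    (sInf_image_closedBall_diff_ball_pos (hW₃.mono hsub) hε (hne.mono hann))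
    (csInf_le_csInf (isCompact_closedBall_diff_ball.bddBelow_image (hW₃.1.mono
      (sdiff_subset.trans hsub))) (hne.image W₃) (image_mono hann))

theorem dist_le_of_lyapunovSettlingTime_lt {x : ℝ → E} {ψ ψ' : ℝ → ℝ} {t₀ t : ℝ}
    (hW₂ : ContinuousOn W₂ (closedBall c (dist (x t₀) c)))
    (hW₃ : PosDefOn (closedBall c (dist (x t₀) c)) c W₃)
    (hx : AntitoneOn (fun τ => dist (x τ) c) (Ici t₀))
    (hψ : ∀ τ ∈ Ici t₀, HasDerivWithinAt ψ (ψ' τ) (Ici t₀) τ)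
    (hψ' : ∀ τ ∈ Ici t₀, ψ' τ ≤ -W₃ (x τ)) (hψ₀ : ψ t₀ ≤ W₂ (x t₀)) (hψt : 0 ≤ ψ t)
    (ht : t₀ ≤ t) (hε : 0 < ε) (hT : lyapunovSettlingTime W₂ W₃ c (dist (x t₀) c) ε < t - t₀) :
    dist (x t) c ≤ ε := by
  by_contra! hεt
  have hann : ∀ τ ∈ Icc t₀ t, x τ ∈ closedBall c (dist (x t₀) c) \ ball c ε := fun τ hτ =>
    ⟨hx self_mem_Ici hτ.1 hτ.1, fun hτε => (hεt.trans_le (hx hτ.1 ht hτ.2)).not_gt hτε⟩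
  have hm := sInf_image_closedBall_diff_ball_pos hW₃ hε ⟨x t, hann t ⟨ht, le_rfl⟩⟩
  set m := sInf (W₃ '' (closedBall c (dist (x t₀) c) \ ball c ε))
  have hdecay : ψ t ≤ ψ t₀ - m * (t - t₀) :=
    image_le_of_deriv_right_le_deriv_boundary
      (B := fun τ => ψ t₀ - m * (τ - t₀)) (B' := fun _ => -m)
      (fun τ hτ => (hψ τ hτ.1).continuousWithinAt.mono fun σ hσ => hσ.1)
      (fun τ hτ => (hψ τ hτ.1).mono (Ici_subset_Ici.2 hτ.1)) (by simp) (by fun_prop)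
      (fun τ _ => (((hasDerivWithinAt_id τ _).sub_const t₀).const_mul m).const_sub (ψ t₀)
        |>.congr_deriv (by simp))
      (fun τ hτ => (hψ' τ hτ.1).trans (neg_le_neg (sInf_image_closedBall_diff_ball_le hW₃.1
        (hann τ (Ico_subset_Icc_self hτ))))) ⟨ht, le_rfl⟩
  have hM := le_sSup_image_closedBall hW₂ (mem_closedBall.2 (le_refl (dist (x t₀) c)))
  have : t - t₀ ≤ lyapunovSettlingTime W₂ W₃ c (dist (x t₀) c) ε := by
    rw [lyapunovSettlingTime, le_div_iff₀ hm]
    nlinarith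
  linarith

end lyapunovSettlingTime

theorem stmt_2_general
    {n : ℕ}
    (D : Set (EuclideanSpace ℝ (Fin n))) (hD : IsOpen D)
    (xstar : EuclideanSpace ℝ (Fin n))
    (f : ℝ → EuclideanSpace ℝ (Fin n) → EuclideanSpace ℝ (Fin n))
    -- `r₀ = sup {r > 0 : ball xstar r ⊆ D} < ∞`
    (r₀ : ℝ) (hr₀pos : 0 < r₀) (hr₀ball : ball xstar r₀ ⊆ D)
    (V : ℝ → EuclideanSpace ℝ (Fin n) → ℝ)
    -- `V` is continuously differentiable on `[0, ∞) × D`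
    (hV : ContDiffOn ℝ 1 (fun p : ℝ × EuclideanSpace ℝ (Fin n) => V p.1 p.2)
      (Ici (0 : ℝ) ×ˢ D))
    (W₁ W₂ W₃ : EuclideanSpace ℝ (Fin n) → ℝ)
    (hW₁ : PosDefOn D xstar W₁) (hW₂ : PosDefOn D xstar W₂) (hW₃ : PosDefOn D xstar W₃)
    -- `W₁ x ≤ V t x ≤ W₂ x`
    (hVbound : ∀ t ∈ Ici (0 : ℝ), ∀ x ∈ D, W₁ x ≤ V t x ∧ V t x ≤ W₂ x)
    -- `∂V/∂t + ∇ₓV ⬝ f ≤ -W₃`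
    (hVderiv : ∀ t ∈ Ici (0 : ℝ), ∀ x ∈ D,
      derivWithin (fun τ => V τ x) (Ici (0 : ℝ)) t + fderiv ℝ (V t) x (f t x) ≤ -W₃ x)
    -- the derivative of `‖x - xstar‖²` along `f` is nonpositive on `B(xstar, r₀)`
    (hmono : ∀ t ∈ Ici (0 : ℝ), ∀ x ∈ ball xstar r₀, 2 * (inner ℝ (x - xstar) (f t x) : ℝ) ≤ 0) :
    ∃ β : ℝ → ℝ → ℝ, IsClassKL (ENNReal.ofReal r₀) β ∧
      ∀ (t₀ : ℝ) (x : ℝ → EuclideanSpace ℝ (Fin n)), 0 ≤ t₀ →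
        (∀ t ∈ Ici t₀, x t ∈ D) →
        (∀ t ∈ Ici t₀, HasDerivWithinAt x (f t (x t)) (Ici t₀) t) →
        x t₀ ∈ ball xstar r₀ →
        ∀ t ∈ Ici t₀, dist (x t) xstar ≤ β (dist (x t₀) xstar) (t - t₀) := by
  have hT : ∀ ε > 0, MonotoneOn (lyapunovSettlingTime W₂ W₃ xstar · ε) (Ico 0 r₀) := fun ε hε =>
    monotoneOn_lyapunovSettlingTime (hW₂.mono hr₀ball) (hW₃.mono hr₀ball) hε
  obtain ⟨β, hβ, hβg⟩ := (isDecayBound_settlingBound hT).exists_isClassKL_ge hr₀pos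
  refine ⟨β, hβ, fun t₀ x ht₀ hxD hx hx₀ t ht => ?_⟩
  have hdist : AntitoneOn (fun τ => dist (x τ) xstar) (Ici t₀) :=
    antitoneOn_dist_of_inner_nonpos hx
      (fun τ hτ hxτ => by linarith [hmono τ (ht₀.trans hτ) _ hxτ]) hx₀
  have hball : closedBall xstar (dist (x t₀) xstar) ⊆ D :=
    (closedBall_subset_ball hx₀).trans hr₀ball
  have hVx : ∀ τ ∈ Ici t₀, HasDerivWithinAt (fun σ => V σ (x σ))
      (derivWithin (fun σ => V σ (x τ)) (Ici 0) τ + fderiv ℝ (V τ) (x τ) (f τ (x τ))) (Ici t₀) τ :=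
    fun τ hτ =>
      hasDerivWithinAt_comp_curve (hV.differentiableOn one_ne_zero _ ⟨ht₀.trans hτ, hxD τ hτ⟩)
        (hD.mem_nhds (hxD τ hτ)) (ht₀.trans hτ) (fun σ hσ => ⟨ht₀.trans hσ, hxD σ hσ⟩) (hx τ hτ)
  refine (le_settlingBound (hdist self_mem_Ici ht ht) fun ε hε hT => ?_).trans
    (hβg _ ⟨dist_nonneg, hx₀⟩ _)
  exact dist_le_of_lyapunovSettlingTime_lt (hW₂.1.mono hball) (hW₃.mono hball) hdist hVx
    (fun τ hτ => hVderiv τ (ht₀.trans hτ) _ (hxD τ hτ)) (hVbound t₀ ht₀ _ (hxD t₀ self_mem_Ici)).2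
    ((hW₁.nonneg (hxD t ht)).trans (hVbound t (ht₀.trans ht) _ (hxD t ht)).1) ht hε hT

theorem stmt_2
    {n : ℕ} (hn : 1 ≤ n)
    (D : Set (EuclideanSpace ℝ (Fin n))) (hD : IsOpen D)
    (xstar : EuclideanSpace ℝ (Fin n)) (hxstar : xstar ∈ D)
    (f : ℝ → EuclideanSpace ℝ (Fin n) → EuclideanSpace ℝ (Fin n))
    -- `f` is continuous in `t`
    (hf_t : ∀ x ∈ D, ContinuousOn (fun t => f t x) (Ici (0 : ℝ)))
    -- `f` is locally Lipschitz in `x`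
    (hf_x : ∀ t ∈ Ici (0 : ℝ), ∀ x₀ ∈ D, ∃ K : ℝ≥0, ∃ ε > (0 : ℝ),
      LipschitzOnWith K (f t) (ball x₀ ε ∩ D))
    -- `xstar` is an equilibrium point
    (hf_eq : ∀ t ∈ Ici (0 : ℝ), f t xstar = 0)
    -- `r₀ = sup {r > 0 : ball xstar r ⊆ D} < ∞`
    (r₀ : ℝ) (hr₀pos : 0 < r₀) (hr₀ball : ball xstar r₀ ⊆ D)
    (hr₀sup : ∀ r : ℝ, ball xstar r ⊆ D → r ≤ r₀)
    (V : ℝ → EuclideanSpace ℝ (Fin n) → ℝ)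
    -- `V` is continuously differentiable on `[0, ∞) × D`
    (hV : ContDiffOn ℝ 1 (fun p : ℝ × EuclideanSpace ℝ (Fin n) => V p.1 p.2)
      (Ici (0 : ℝ) ×ˢ D))
    (W₁ W₂ W₃ : EuclideanSpace ℝ (Fin n) → ℝ)
    (hW₁ : PosDefOn D xstar W₁) (hW₂ : PosDefOn D xstar W₂) (hW₃ : PosDefOn D xstar W₃)
    -- `W₁ x ≤ V t x ≤ W₂ x`
    (hVbound : ∀ t ∈ Ici (0 : ℝ), ∀ x ∈ D, W₁ x ≤ V t x ∧ V t x ≤ W₂ x)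
    -- `∂V/∂t + ∇ₓV ⬝ f ≤ -W₃`
    (hVderiv : ∀ t ∈ Ici (0 : ℝ), ∀ x ∈ D,
      derivWithin (fun τ => V τ x) (Ici (0 : ℝ)) t + fderiv ℝ (V t) x (f t x) ≤ -W₃ x)
    -- `W₁ x / (r₀² - ‖x - xstar‖²) → +∞` as `‖x - xstar‖ → r₀` with `x ∈ B(xstar, r₀)`
    (hblow : Tendsto (fun x => W₁ x / (r₀ ^ 2 - dist x xstar ^ 2))
      (comap (fun x => dist x xstar) (nhdsWithin r₀ (Iio r₀))) atTop)
    -- the derivative of `‖x - xstar‖²` along `f` is nonpositive on `B(xstar, r₀)`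
    (hmono : ∀ t ∈ Ici (0 : ℝ), ∀ x ∈ ball xstar r₀, 2 * (inner ℝ (x - xstar) (f t x) : ℝ) ≤ 0) :
    ∃ β : ℝ → ℝ → ℝ, IsClassKL (ENNReal.ofReal r₀) β ∧
      ∀ (t₀ : ℝ) (x : ℝ → EuclideanSpace ℝ (Fin n)), 0 ≤ t₀ →
        (∀ t ∈ Ici t₀, x t ∈ D) →
        (∀ t ∈ Ici t₀, HasDerivWithinAt x (f t (x t)) (Ici t₀) t) →
        x t₀ ∈ ball xstar r₀ →
        ∀ t ∈ Ici t₀, dist (x t) xstar ≤ β (dist (x t₀) xstar) (t - t₀) :=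
  stmt_2_general D hD xstar f r₀ hr₀pos hr₀ball V hV W₁ W₂ W₃ hW₁ hW₂ hW₃ hVbound hVderiv hmono
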